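/- Let w be a word over a finite alphabet T whose Parikh vector P(w) is prime. Suppose that for every state s_q of the circular LTS induced by w at which a factor ab begins (the arc out of s_q is labelled a, the next arc is labelled b, a≠b), and for every state s_j with P_jq(a)≠0, it holds that m·P_jq(a) < n·(P_jq(b)+1), where g=gcd(P(w)(a),P(w)(b)), m=P(w)(b)/g, n=P(w)(a)/g. Then w is cyclically solvable by a weighted marked graph. -/

import Mathlib

/-!
The solving net has a place `(a, b)` for each ordered pair of distinct letters, filled by `a` with
weight `m = P(b)/g` and emptied by `b` with weight `n = P(a)/g`; as `m P(a) = n P(b)`, firing `w`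
brings every place back to its marking. Take the least initial marking under which `w` can be
fired cyclically. A letter `b` other than the next one is then disabled: walking forward to the
next `b`, the drift of `(a, b)`, with `a` the letter just before that `b`, never decreases, and
the factor condition says precisely that at `a` it exceeds its minimum by less than `n`. Two
states with equal markings would cut out a factor shorter than `w` whose Parikh vector is
proportional to `P(w)`, which the primality of `P(w)` rules out.
-/

/-- A labelled transition system with initial state. -/
structure LTS (S L : Type) where
  tr : S → L → S → Prop
  init : S

namespace LTS

/-- Reachability between states of an LTS (directed paths of arcs). -/
def reach {S L : Type} (A : LTS S L) : S → S → Prop :=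
  Relation.ReflTransGen (fun s s' => ∃ t, A.tr s t s')

/-- An LTS is reversible if every state is reachable from the initial state
and the initial state is reachable from every state. -/
def reversible {S L : Type} (A : LTS S L) : Prop :=
  ∀ s : S, A.reach A.init s ∧ A.reach s A.init

end LTS

/-- Isomorphism of labelled transition systems. -/
def ltsIso {S1 S2 L : Type} (A : LTS S1 L) (B : LTS S2 L) : Prop :=
  ∃ ζ : S1 ≃ S2, ζ A.init = B.init ∧ ∀ s t s', A.tr s t s' ↔ B.tr (ζ s) t (ζ s')

/-- A weighted Petri net with places `P` and transitions `T`: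
`pre p t` is the weight of the arc from `p` to `t`, `post t p` of the arc from `t` to `p`. -/
structure PetriNet (P T : Type) where
  pre : P → T → ℕ
  post : T → P → ℕ

namespace PetriNet

variable {P T : Type}

/-- A transition `t` is enabled at marking `M`. -/
def enabled (N : PetriNet P T) (M : P → ℕ) (t : T) : Prop :=
  ∀ p, N.pre p t ≤ M p

/-- A place `p` is enabled by a marking `M`. -/
def placeEnabled (N : PetriNet P T) (M : P → ℕ) (p : P) : Prop :=
  ∀ t, N.pre p t ≤ M p

/-- The marking obtained by firing `t` at `M`. -/
def fire (N : PetriNet P T) (M : P → ℕ) (t : T) : P → ℕ :=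
  fun p => M p - N.pre p t + N.post t p

/-- `M [t⟩ M'`. -/
def step (N : PetriNet P T) (M : P → ℕ) (t : T) (M' : P → ℕ) : Prop :=
  N.enabled M t ∧ M' = N.fire M t

/-- A marking `M'` is reachable from `M` by a finite sequence of firings. -/
def Reach (N : PetriNet P T) (M M' : P → ℕ) : Prop :=
  Relation.ReflTransGen (fun M1 M2 => ∃ t, N.step M1 t M2) M M'

/-- A sequence of transitions is firable from a marking. -/
def firable (N : PetriNet P T) : (P → ℕ) → List T → Prop
  | _, [] => True
  | M, t :: σ => N.enabled M t ∧ N.firable (N.fire M t) σ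

/-- The marking reached after firing a sequence of transitions. -/
def fireSeq (N : PetriNet P T) : (P → ℕ) → List T → (P → ℕ)
  | M, [] => M
  | M, t :: σ => N.fireSeq (N.fire M t) σ

/-- A net is choice-free if every place has at most one output transition. -/
def choiceFree (N : PetriNet P T) : Prop :=
  ∀ p t t', 0 < N.pre p t → 0 < N.pre p t' → t = t'

/-- A weighted marked graph: each place has at most one output and at most one input transition. -/
def wmg (N : PetriNet P T) : Prop :=
  N.choiceFree ∧ ∀ p t t', 0 < N.post t p → 0 < N.post t' p → t = t'

/-- A net is pure if no place is a side condition of some transition. -/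
def isPure (N : PetriNet P T) : Prop :=
  ∀ p t, ¬(0 < N.pre p t ∧ 0 < N.post t p)

/-- Liveness: from every reachable marking, every transition can eventually fire again. -/
def live (N : PetriNet P T) (M0 : P → ℕ) : Prop :=
  ∀ (t : T) (M : P → ℕ), N.Reach M0 M → ∃ M', N.Reach M M' ∧ N.enabled M' t

/-- The reachability graph of a system, as an LTS on the reachable markings. -/
def RG (N : PetriNet P T) (M0 : P → ℕ) : LTS {M : P → ℕ // N.Reach M0 M} T where
  tr := fun M t M' => N.step M.1 t M'.1
  init := ⟨M0, Relation.ReflTransGen.refl⟩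

end PetriNet

/-- A system solves an LTS if its reachability graph is isomorphic to it. -/
def Solves {Pl T S : Type} (N : PetriNet Pl T) (M0 : Pl → ℕ) (A : LTS S T) : Prop :=
  ltsIso (N.RG M0) A

/-- CF-solvability of an LTS. -/
def CFSolvable {S L : Type} (A : LTS S L) : Prop :=
  ∃ (k : ℕ) (N : PetriNet (Fin k) L) (M0 : Fin k → ℕ), N.choiceFree ∧ Solves N M0 A

/-- WMG-solvability of an LTS. -/
def WMGSolvable {S L : Type} (A : LTS S L) : Prop :=
  ∃ (k : ℕ) (N : PetriNet (Fin k) L) (M0 : Fin k → ℕ), N.wmg ∧ Solves N M0 A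

/-- Solvability of an LTS by a pure choice-free system. -/
def PureCFSolvable {S L : Type} (A : LTS S L) : Prop :=
  ∃ (k : ℕ) (N : PetriNet (Fin k) L) (M0 : Fin k → ℕ),
    N.choiceFree ∧ N.isPure ∧ Solves N M0 A

/-- The circular LTS induced by a (nonempty) word `w`. -/
def circLTS {L : Type} (w : List L) (hw : 0 < w.length) : LTS (Fin w.length) L where
  tr := fun s t s' => t = w.get s ∧ s'.val = (s.val + 1) % w.length
  init := ⟨0, hw⟩

/-- The Parikh vector of a word. -/
def parikh {L : Type} [DecidableEq L] (w : List L) (t : L) : ℕ := w.count t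

/-- A vector of naturals is prime if the gcd of its components equals 1. -/
def primeVec {L : Type} [Fintype L] (Υ : L → ℕ) : Prop := Finset.univ.gcd Υ = 1

/-- A word is cyclically solvable by a WMG. -/
def cyclicWMGSolvable {L : Type} (w : List L) : Prop :=
  ∃ (hw : 0 < w.length) (k : ℕ) (N : PetriNet (Fin k) L) (M0 : Fin k → ℕ),
    N.wmg ∧ Solves N M0 (circLTS w hw)

/-- A word is cyclically solvable by a CF net. -/
def cyclicCFSolvable {L : Type} (w : List L) : Prop :=
  ∃ (hw : 0 < w.length) (k : ℕ) (N : PetriNet (Fin k) L) (M0 : Fin k → ℕ),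
    N.choiceFree ∧ Solves N M0 (circLTS w hw)

/-- A circuit net: places `p_0 … p_{k-1}` and transitions `τ 0 … τ (k-1)` arranged in a
single alternating cycle, `τ i` being the unique output of `p_i` and the unique input
of `p_{i+1 mod k}`. -/
def isCircuit {k : ℕ} {L : Type} (hk : 0 < k) (N : PetriNet (Fin k) L) : Prop :=
  ∃ τ : Fin k ≃ L,
    (∀ (i : Fin k) (t : L), 0 < N.pre i t ↔ t = τ i) ∧
    (∀ (i : Fin k) (t : L), 0 < N.post t i ↔ t = τ ⟨(i.val + k - 1) % k, Nat.mod_lt _ hk⟩)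

/-- A word is cyclically solvable by a circuit system. -/
def cyclicCircuitSolvable {L : Type} (v : List L) : Prop :=
  ∃ (hv : 0 < v.length) (k : ℕ) (hk : 0 < k) (N : PetriNet (Fin k) L) (M0 : Fin k → ℕ),
    isCircuit hk N ∧ Solves N M0 (circLTS v hv)

/-- The ordered pair `a b` is circularly adjacent in `w`. -/
def cAdj {L : Type} (w : List L) (a b : L) : Prop :=
  a ≠ b ∧ ((∃ w1 w2, w = w1 ++ a :: b :: w2) ∨ ∃ w3, w = b :: w3 ++ [a])

/-- The projection of a word on a two-element sub-alphabet, as a word over that sub-alphabet. -/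
def projPair {L : Type} [DecidableEq L] (w : List L) (a b : L) :
    List {x : L // x = a ∨ x = b} :=
  w.filterMap (fun x => if h : x = a ∨ x = b then some ⟨x, h⟩ else none)

/-- The Parikh vector `P_jq` of the segment of `w` read circularly from state `s_j`
to state `s_q` (empty when `j = q`). -/
def segParikh {L : Type} [DecidableEq L] (w : List L) (hw : 0 < w.length)
    (j q : Fin w.length) (t : L) : ℕ :=
  ((List.range ((q.val + w.length - j.val) % w.length)).map
    (fun i => w.get ⟨(j.val + i) % w.length, Nat.mod_lt _ hw⟩)).count t

/-- A region of an LTS. -/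
def isRegion {S L : Type} (A : LTS S L) (R : S → ℕ) (B F : L → ℕ) : Prop :=
  ∀ s t s', A.tr s t s' → B t ≤ R s ∧ R s' = R s - B t + F t

/-- `gcd_p`: the gcd of all (nonzero) input and output weights of a place. -/
def gcdPlace {Pl T : Type} [Fintype T] (N : PetriNet Pl T) (p : Pl) : ℕ :=
  Finset.univ.gcd (fun t => Nat.gcd (N.pre p t) (N.post t p))

/-- Conservativeness of a net. -/
def conservative {Pl T : Type} [Fintype Pl] (N : PetriNet Pl T) : Prop :=
  ∃ X : Pl → ℕ, (∀ p, 1 ≤ X p) ∧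
    ∀ t, ∑ p, (X p : ℤ) * ((N.post t p : ℤ) - (N.pre p t : ℤ)) = 0

/-- The P-subnet induced by a family of places. -/
def restrictNet {Pl T : Type} {k : ℕ} (N : PetriNet Pl T) (π : Fin k → Pl) :
    PetriNet (Fin k) T where
  pre := fun i t => N.pre (π i) t
  post := fun t i => N.post t (π i)

theorem circLTS_reach_init {L : Type} (w : List L) (hw : 0 < w.length) (s : Fin w.length) :
    (circLTS w hw).reach (circLTS w hw).init s := by
  obtain ⟨i, hi⟩ := s
  induction i with
  | zero => exact .refl
  | succ i ih => exact (ih (by omega)).tail ⟨w.get ⟨i, by omega⟩, rfl, (Nat.mod_eq_of_lt hi).symm⟩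

theorem solves_of_injective {P T S : Type} (N : PetriNet P T) (M0 : P → ℕ) (A : LTS S T)
    (hA : ∀ s, A.reach A.init s) (f : S → P → ℕ) (hf : Function.Injective f)
    (hinit : f A.init = M0) (hstep : ∀ s t M', N.step (f s) t M' ↔ ∃ s', A.tr s t s' ∧ f s' = M') :
    Solves N M0 A := by
  have hreach : ∀ s, N.Reach M0 (f s) := fun s => by
    induction hA s with
    | refl => rw [hinit]; exact .refl
    | tail _ hs ih =>
      obtain ⟨t, ht⟩ := hs
      exact ih.tail ⟨t, (hstep _ t _).2 ⟨_, ht, rfl⟩⟩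
  have hcover : ∀ M, N.Reach M0 M → ∃ s, f s = M := fun M hM => by
    induction hM with
    | refl => exact ⟨A.init, hinit⟩
    | tail _ hM' ih =>
      obtain ⟨s, rfl⟩ := ih
      obtain ⟨t, ht⟩ := hM'
      obtain ⟨s', -, hs'⟩ := (hstep s t _).1 ht
      exact ⟨s', hs'⟩
  let E : S ≃ {M // N.Reach M0 M} := Equiv.ofBijective (fun s => ⟨f s, hreach s⟩)
    ⟨fun s s' h => hf (congrArg Subtype.val h),
      fun M => (hcover M.1 M.2).imp fun _ hs => Subtype.ext hs⟩
  refine ⟨E.symm, E.symm_apply_eq.2 (Subtype.ext hinit.symm), fun M t M' => ?_⟩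
  obtain ⟨s, rfl⟩ := E.surjective M
  obtain ⟨s', rfl⟩ := E.surjective M'
  simp only [Equiv.symm_apply_apply]
  change N.step (f s) t (f s') ↔ _
  rw [hstep]
  exact ⟨fun ⟨_, h, h'⟩ => hf h' ▸ h, fun h => ⟨s', h, rfl⟩⟩

namespace PetriNet

variable {P T : Type}

def effect (N : PetriNet P T) (p : P) (t : T) : ℤ := N.post t p - N.pre p t

def drift (N : PetriNet P T) (w : List T) (p : P) (i : ℕ) : ℤ :=
  ((w.take i).map (N.effect p)).sum

def minDrift (N : PetriNet P T) (w : List T) (p : P) : ℤ :=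
  (Finset.range (w.length + 1)).inf' Finset.nonempty_range_add_one (N.drift w p)

/-- Shifting the drift by its minimum gives the least marking of each place that never goes
negative while `w` is fired. -/
def tightMarking (N : PetriNet P T) (w : List T) (i : ℕ) (p : P) : ℕ :=
  (N.drift w p i - N.minDrift w p).toNat

variable {N : PetriNet P T} {w : List T} {p : P} {i : ℕ}

theorem tightMarking_restrictNet {k : ℕ} (π : Fin k → P) (p : Fin k) :
    (restrictNet N π).tightMarking w i p = N.tightMarking w i (π p) := rfl

@[simp]
theorem drift_zero : N.drift w p 0 = 0 := by simp [drift]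

theorem drift_succ (hi : i < w.length) :
    N.drift w p (i + 1) = N.drift w p i + N.effect p w[i] := by
  simp only [drift, List.map_take]
  rw [List.sum_take_succ _ _ (by simpa using hi), List.getElem_map]

theorem drift_succ_mod (hcyc : N.drift w p w.length = 0) (hi : i < w.length) :
    N.drift w p ((i + 1) % w.length) = N.drift w p i + N.effect p w[i] := by
  rcases Nat.lt_or_ge (i + 1) w.length with h | h
  · rw [Nat.mod_eq_of_lt h, drift_succ hi]
  · have h : i + 1 = w.length := by omega
    rw [h, Nat.mod_self, drift_zero, ← hcyc, ← h, drift_succ hi]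

theorem minDrift_le (hi : i ≤ w.length) : N.minDrift w p ≤ N.drift w p i :=
  Finset.inf'_le _ (Finset.mem_range.2 (Nat.lt_succ_of_le hi))

theorem exists_drift_eq_minDrift : ∃ j ≤ w.length, N.drift w p j = N.minDrift w p := by
  obtain ⟨j, hj, h⟩ := Finset.exists_mem_eq_inf' Finset.nonempty_range_add_one (N.drift w p)
  exact ⟨j, Nat.lt_succ_iff.1 (Finset.mem_range.1 hj), h.symm⟩

theorem tightMarking_cast (hi : i ≤ w.length) :
    (N.tightMarking w i p : ℤ) = N.drift w p i - N.minDrift w p :=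
  Int.toNat_of_nonneg (sub_nonneg.2 (minDrift_le hi))

theorem tightMarking_length (hcyc : ∀ p, N.drift w p w.length = 0) :
    N.tightMarking w w.length = N.tightMarking w 0 := by
  funext p
  simp [tightMarking, hcyc]

/-- In a pure net a place feeding `w[i]` is not fed by it, so firing `w[i]` lowers the drift by
the whole weight, and the drift stays above its minimum. -/
theorem enabled_tightMarking (hpure : N.isPure) (hi : i < w.length) :
    N.enabled (N.tightMarking w i) w[i] := by
  intro p
  rcases Nat.eq_zero_or_pos (N.pre p w[i]) with h0 | hpos
  · simp [h0]
  · have hpost : N.post w[i] p = 0 := Nat.eq_zero_of_not_pos fun h => hpure p _ ⟨hpos, h⟩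
    have hmin := minDrift_le (N := N) (p := p) (Nat.succ_le_of_lt hi)
    rw [drift_succ hi, effect, hpost, Nat.cast_zero, zero_sub] at hmin
    zify
    rw [tightMarking_cast hi.le]
    linarith

theorem fire_tightMarking (hi : i < w.length) (hen : N.enabled (N.tightMarking w i) w[i]) :
    N.fire (N.tightMarking w i) w[i] = N.tightMarking w (i + 1) := by
  funext p
  have hp := hen p
  simp only [fire]
  zify [hp]
  rw [tightMarking_cast hi.le, tightMarking_cast hi, drift_succ hi, effect]
  ring

theorem solves_circLTS_tightMarking (hw : 0 < w.length) (hpure : N.isPure)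
    (hcyc : ∀ p, N.drift w p w.length = 0)
    (hdisabled : ∀ i (hi : i < w.length) t, N.enabled (N.tightMarking w i) t → t = w[i])
    (hsep : ∀ i j, i < j → j < w.length → N.tightMarking w i ≠ N.tightMarking w j) :
    Solves N (N.tightMarking w 0) (circLTS w hw) := by
  have hnext : ∀ i (hi : i < w.length),
      N.tightMarking w ((i + 1) % w.length) = N.fire (N.tightMarking w i) w[i] := by
    intro i hi
    rw [fire_tightMarking hi (enabled_tightMarking hpure hi)]
    rcases Nat.lt_or_ge (i + 1) w.length with h | h
    · rw [Nat.mod_eq_of_lt h]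
    · rw [show i + 1 = w.length by omega, Nat.mod_self, tightMarking_length hcyc]
  refine solves_of_injective N _ _ (circLTS_reach_init w hw) (fun s => N.tightMarking w s)
    (fun s s' h => ?_) rfl fun s t M' => ⟨?_, ?_⟩
  · by_contra hne
    rcases Nat.lt_or_gt_of_ne (Fin.val_ne_of_ne hne) with hlt | hlt
    · exact hsep _ _ hlt s'.isLt h
    · exact hsep _ _ hlt s.isLt h.symm
  · rintro ⟨hen, rfl⟩
    obtain rfl := hdisabled s s.isLt t hen
    exact ⟨⟨(s + 1) % w.length, Nat.mod_lt _ hw⟩, ⟨rfl, rfl⟩, hnext s s.isLt⟩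
  · rintro ⟨s', ⟨rfl, hs'⟩, rfl⟩
    refine ⟨enabled_tightMarking hpure s.isLt, ?_⟩
    simp only [hs']
    exact hnext s s.isLt

theorem cyclicWMGSolvable_of_tightMarking [Finite P] (hw : 0 < w.length) (hwmg : N.wmg)
    (hpure : N.isPure) (hcyc : ∀ p, N.drift w p w.length = 0)
    (hdisabled : ∀ i (hi : i < w.length) t, N.enabled (N.tightMarking w i) t → t = w[i])
    (hsep : ∀ i j, i < j → j < w.length → N.tightMarking w i ≠ N.tightMarking w j) :
    cyclicWMGSolvable w := by
  obtain ⟨n, ⟨e⟩⟩ := Finite.exists_equiv_fin P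
  refine ⟨hw, n, restrictNet N e.symm, _,
    ⟨fun p => hwmg.1 (e.symm p), fun p => hwmg.2 (e.symm p)⟩,
    solves_circLTS_tightMarking hw (fun p => hpure (e.symm p)) (fun p => hcyc (e.symm p))
      (fun i hi t hen => hdisabled i hi t fun p => ?_)
      (fun i j hij hj h => hsep i j hij hj (funext fun p => ?_))⟩
  · have hp := hen (e p)
    rw [tightMarking_restrictNet] at hp
    simpa [restrictNet] using hp
  · simpa only [tightMarking_restrictNet, Equiv.symm_apply_apply] using congrFun h (e p)

end PetriNet

section CircularSegment

variable {L : Type} (w : List L) (hw : 0 < w.length)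

def circSegment (j q : Fin w.length) : List L :=
  (List.range ((q.val + w.length - j.val) % w.length)).map
    (fun i => w.get ⟨(j.val + i) % w.length, Nat.mod_lt _ hw⟩)

theorem segParikh_eq_count [DecidableEq L] (j q : Fin w.length) (t : L) :
    segParikh w hw j q t = (circSegment w hw j q).count t := rfl

theorem circSegment_eq_take_rotate (j q : Fin w.length) :
    circSegment w hw j q = (w.rotate j).take ((q.val + w.length - j.val) % w.length) := by
  refine List.ext_getElem (by simp [circSegment, (Nat.mod_lt _ hw).le]) fun o h _ => ?_
  simp [circSegment, List.getElem_rotate, Nat.add_comm]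

theorem sum_map_circSegment_add {M : Type} [AddCommMonoid M] (f : L → M) (j q : Fin w.length) :
    ((circSegment w hw j q).map f).sum + ((w.take j).map f).sum =
      ((w.take q).map f).sum + if q.val < j.val then (w.map f).sum else 0 := by
  have hj := j.isLt
  have hq := q.isLt
  rw [circSegment_eq_take_rotate, List.rotate_eq_drop_append_take hj.le]
  have hsplit : ∀ l : List L, (l.map f).sum = ((l.take j).map f).sum + ((l.drop j).map f).sum :=
    fun l => by rw [← List.sum_append, ← List.map_append, List.take_append_drop]
  split_ifs with hqj
  · have hlen : (q.val + w.length - j.val) % w.length = (w.length - j) + q := by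
      rw [Nat.mod_eq_of_lt (by omega)]
      omega
    rw [hlen, List.take_append, List.take_of_length_le (by simp), List.length_drop,
      Nat.add_sub_cancel_left, List.take_take, min_eq_left hqj.le, List.map_append,
      List.sum_append, hsplit w]
    abel
  · have hlen : (q.val + w.length - j.val) % w.length = q - j := by
      rw [show q.val + w.length - j.val = (q - j) + w.length by omega, Nat.add_mod_right,
        Nat.mod_eq_of_lt (by omega)]
    have htake : w.take j = (w.take q).take j := by
      rw [List.take_take, min_eq_left (show j.val ≤ q.val by omega)]
    rw [hlen, List.take_append_of_le_length (by simp only [List.length_drop]; omega),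
      ← List.drop_take, hsplit (w.take q), htake, add_zero, add_comm]

end CircularSegment

/-- Summing `P y * Δ x = P x * Δ y` over `y` gives `(∑ P) * Δ x = P x * ∑ Δ`, so `∑ P` divides
every `P x * ∑ Δ`, hence also `gcd P * ∑ Δ = ∑ Δ`. -/
theorem sum_dvd_sum_of_proportional {ι : Type} [Fintype ι] {P : ι → ℕ} {Δ : ι → ℤ}
    (hP : Finset.univ.gcd P = 1) (h : ∀ x y, (P y : ℤ) * Δ x = P x * Δ y) :
    ((∑ x, P x : ℕ) : ℤ) ∣ ∑ x, Δ x := by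
  have hdvd : ∀ x, ((∑ y, P y : ℕ) : ℤ) ∣ P x * ∑ y, Δ y := fun x =>
    ⟨Δ x, by push_cast; rw [Finset.mul_sum, Finset.sum_mul]; exact (Finset.sum_congr rfl
      fun y _ => (h x y).symm)⟩
  rw [Int.natCast_dvd]
  have hgcd := Finset.dvd_gcd (s := Finset.univ)
    (f := fun x => (∑ y, Δ y).natAbs * P x) fun x _ => by
      rw [mul_comm, ← Int.natAbs_natCast (P x), ← Int.natAbs_mul]
      exact Int.natCast_dvd.1 (hdvd x)
  rwa [Finset.gcd_mul_left, hP, normalize_eq, mul_one] at hgcd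

theorem sum_count_eq_length {L : Type} [Fintype L] [DecidableEq L] (l : List L) :
    ∑ t, l.count t = l.length := by
  simpa using Multiset.sum_count_eq_card (s := Finset.univ) (m := (l : Multiset L)) (by simp)

section PairNet

variable {L : Type} [DecidableEq L] (w : List L)

/-- `outWeight w a b` and `inWeight w a b` are the `m` and `n` of the factor `ab`. -/
def outWeight (x y : L) : ℕ := w.count y / Nat.gcd (w.count x) (w.count y)

def inWeight (x y : L) : ℕ := w.count x / Nat.gcd (w.count x) (w.count y)

def pairNet : PetriNet (L × L) L where
  pre p t := if t = p.2 ∧ p.1 ≠ p.2 then inWeight w p.1 p.2 else 0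
  post t p := if t = p.1 ∧ p.1 ≠ p.2 then outWeight w p.1 p.2 else 0

variable {w}

theorem gcd_mul_outWeight (x y : L) :
    Nat.gcd (w.count x) (w.count y) * outWeight w x y = w.count y :=
  Nat.mul_div_cancel' (Nat.gcd_dvd_right _ _)

theorem gcd_mul_inWeight (x y : L) :
    Nat.gcd (w.count x) (w.count y) * inWeight w x y = w.count x :=
  Nat.mul_div_cancel' (Nat.gcd_dvd_left _ _)

theorem outWeight_mul_count (x y : L) :
    outWeight w x y * w.count x = inWeight w x y * w.count y := by
  rw [outWeight, inWeight, Nat.div_mul_right_comm (Nat.gcd_dvd_right _ _),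
    Nat.div_mul_right_comm (Nat.gcd_dvd_left _ _), mul_comm]

theorem inWeight_pos {x : L} (hx : x ∈ w) (y : L) : 0 < inWeight w x y := by
  have hpos := List.count_pos_iff.2 hx
  exact Nat.div_pos (Nat.gcd_le_left _ hpos) (Nat.gcd_pos_of_pos_left _ hpos)

theorem pre_pairNet {x y : L} (hxy : x ≠ y) : (pairNet w).pre (x, y) y = inWeight w x y := by
  simp [pairNet, hxy]

theorem pairNet_wmg : (pairNet w).wmg := by
  refine ⟨fun p t t' ht ht' => ?_, fun p t t' ht ht' => ?_⟩ <;>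
  · simp only [pairNet] at ht ht'
    split_ifs at ht ht' with h h' <;> simp_all

theorem pairNet_isPure : (pairNet w).isPure := by
  rintro ⟨x, y⟩ t ⟨hpre, hpost⟩
  simp only [pairNet] at hpre hpost
  split_ifs at hpre hpost with h h' <;> simp_all

theorem effect_pairNet {x y : L} (hxy : x ≠ y) (t : L) :
    (pairNet w).effect (x, y) t =
      (if t = x then (outWeight w x y : ℤ) else 0) - if t = y then (inWeight w x y : ℤ) else 0 := by
  by_cases htx : t = x <;> by_cases hty : t = y <;> simp_all [PetriNet.effect, pairNet]

theorem effect_pairNet_self (x : L) : (pairNet w).effect (x, x) = fun _ => 0 := by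
  funext t
  simp [PetriNet.effect, pairNet]

theorem sum_map_effect_pairNet {x y : L} (hxy : x ≠ y) (l : List L) :
    (l.map ((pairNet w).effect (x, y))).sum =
      outWeight w x y * l.count x - inWeight w x y * l.count y := by
  induction l with
  | nil => simp
  | cons t l ih =>
    rw [List.map_cons, List.sum_cons, ih, effect_pairNet hxy, List.count_cons, List.count_cons]
    by_cases htx : t = x
    · subst htx
      simp [hxy]
      ring
    · by_cases hty : t = y
      · subst hty
        simp [htx]
        ring
      · simp [htx, hty]

theorem drift_pairNet {x y : L} (hxy : x ≠ y) (v : List L) (i : ℕ) :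
    (pairNet w).drift v (x, y) i =
      outWeight w x y * (v.take i).count x - inWeight w x y * (v.take i).count y :=
  sum_map_effect_pairNet hxy _

theorem drift_pairNet_length (p : L × L) : (pairNet w).drift w p w.length = 0 := by
  obtain ⟨x, y⟩ := p
  by_cases hxy : x = y
  · subst hxy
    simp [PetriNet.drift, effect_pairNet_self]
  · rw [drift_pairNet hxy, List.take_length, sub_eq_zero]
    exact_mod_cast outWeight_mul_count x y

end PairNet

section FactorCondition

open PetriNet

variable {L : Type} [DecidableEq L] {w : List L} {hw : 0 < w.length}

def FactorCondition (w : List L) (hw : 0 < w.length) : Prop :=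
  ∀ (q : Fin w.length) (a b : L), a ≠ b →
    w.get q = a → w.get ⟨(q.val + 1) % w.length, Nat.mod_lt _ hw⟩ = b →
    ∀ j : Fin w.length, segParikh w hw j q a ≠ 0 →
      outWeight w a b * segParikh w hw j q a < inWeight w a b * (segParikh w hw j q b + 1)

/-- Along the circular segment from `j` to `q` the drift of `(a, b)` changes by
`outWeight * P_jq(a) - inWeight * P_jq(b)`, which the factor condition bounds. -/
theorem drift_pairNet_sub_lt (hcond : FactorCondition w hw) {q : Fin w.length} {a b : L}
    (hab : a ≠ b) (ha : w.get q = a) (hb : w.get ⟨(q.val + 1) % w.length, Nat.mod_lt _ hw⟩ = b)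
    {j : ℕ} (hj : j ≤ w.length) :
    (pairNet w).drift w (a, b) q - (pairNet w).drift w (a, b) j < inWeight w a b := by
  wlog hjk : j < w.length generalizing j
  · rw [show j = w.length by omega, drift_pairNet_length, ← drift_zero (w := w) (p := (a, b))]
    exact this (Nat.zero_le _) hw
  have hfull : (w.map ((pairNet w).effect (a, b))).sum = 0 := by
    simpa [PetriNet.drift] using drift_pairNet_length (w := w) (a, b)
  have hseg := sum_map_circSegment_add w hw ((pairNet w).effect (a, b)) ⟨j, hjk⟩ q
  rw [hfull, ite_self, add_zero, sum_map_effect_pairNet hab, ← segParikh_eq_count,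
    ← segParikh_eq_count] at hseg
  simp only [PetriNet.drift, ← hseg, add_sub_cancel_right]
  have hn := inWeight_pos (ha ▸ List.get_mem w q) b
  by_cases hz : segParikh w hw ⟨j, hjk⟩ q a = 0
  · rw [hz]
    push_cast
    nlinarith
  · have h := hcond q a b hab ha hb ⟨j, hjk⟩ hz
    zify at h
    linarith

/-- Walk from `i` to the next `b`: letters other than `b` do not lower the drift of `(a, b)`, and
the letter `a` just before that `b` satisfies the factor condition. -/
theorem exists_forall_drift_pairNet_sub_lt (hcond : FactorCondition w hw) {b : L} (hb : b ∈ w)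
    {i : ℕ} (hi : i < w.length) (hib : w[i] ≠ b) :
    ∃ a ≠ b, ∀ j ≤ w.length,
      (pairNet w).drift w (a, b) i - (pairNet w).drift w (a, b) j < inWeight w a b := by
  obtain ⟨r, hr, hrb⟩ := List.getElem_of_mem hb
  suffices ∀ d i (hi : i < w.length), w[i] ≠ b → w[(i + d) % w.length]'(Nat.mod_lt _ hw) = b →
      ∃ a ≠ b, ∀ j ≤ w.length,
        (pairNet w).drift w (a, b) i - (pairNet w).drift w (a, b) j < inWeight w a b by
    refine this (r + w.length - i) i hi hib ?_
    simp only [show i + (r + w.length - i) = r + w.length by omega, Nat.add_mod_right,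
      Nat.mod_eq_of_lt hr, hrb]
  intro d
  induction d with
  | zero =>
    intro i hi hib hb
    simp only [Nat.add_zero, Nat.mod_eq_of_lt hi] at hb
    exact absurd hb hib
  | succ d ih =>
    intro i hi hib hdb
    by_cases hnext : w[(i + 1) % w.length]'(Nat.mod_lt _ hw) = b
    · exact ⟨w[i], hib, fun j hj => drift_pairNet_sub_lt hcond (q := ⟨i, hi⟩) hib rfl hnext hj⟩
    · obtain ⟨a, hab, h⟩ := ih _ (Nat.mod_lt _ hw) hnext
        (by simpa only [Nat.mod_add_mod, Nat.add_right_comm i 1 d, Nat.add_assoc] using hdb)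
      refine ⟨a, hab, fun j hj => lt_of_le_of_lt (sub_le_sub_right ?_ _) (h j hj)⟩
      rw [drift_succ_mod (drift_pairNet_length _) hi, effect_pairNet hab, if_neg hib]
      simp only [sub_zero, le_add_iff_nonneg_right]
      split_ifs <;> simp

theorem eq_of_pairNet_enabled_tightMarking (hcond : FactorCondition w hw) {i : ℕ}
    (hi : i < w.length) (t : L) (hen : (pairNet w).enabled ((pairNet w).tightMarking w i) t) : t = w[i] := by
  by_contra hne
  obtain ⟨a, hat, hlt⟩ : ∃ a ≠ t, ∀ j ≤ w.length,
      (pairNet w).drift w (a, t) i - (pairNet w).drift w (a, t) j < inWeight w a t := by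
    by_cases ht : t ∈ w
    · exact exists_forall_drift_pairNet_sub_lt hcond ht hi (Ne.symm hne)
    · have hzero : ∀ j, (pairNet w).drift w (w[i], t) j = 0 := fun j => by
        rw [drift_pairNet (Ne.symm hne), outWeight, List.count_eq_zero.2 ht,
          List.count_eq_zero.2 fun h => ht (List.mem_of_mem_take h)]
        simp
      refine ⟨w[i], Ne.symm hne, fun j _ => ?_⟩
      rw [hzero, hzero, sub_zero]
      exact_mod_cast inWeight_pos (List.getElem_mem hi) t
  obtain ⟨j, hj, hjmin⟩ := exists_drift_eq_minDrift (N := pairNet w) (w := w) (p := (a, t))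
  have hpre := hen (a, t)
  rw [pre_pairNet hat] at hpre
  zify at hpre
  rw [tightMarking_cast hi.le, ← hjmin] at hpre
  linarith [hlt j hj]

end FactorCondition

/-- Equal tight markings after `i` and `j` letters would make the Parikh vector of `w[i:j]`
proportional to `P(w)`; primality then forces `|w|` to divide `j - i`. -/
theorem pairNet_tightMarking_ne {L : Type} [Fintype L] [DecidableEq L] {w : List L}
    (hprime : Finset.univ.gcd (fun t => w.count t) = 1) {i j : ℕ} (hij : i < j)
    (hj : j < w.length) : (pairNet w).tightMarking w i ≠ (pairNet w).tightMarking w j := by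
  intro h
  set Δ : L → ℤ := fun t => (w.take j).count t - (w.take i).count t with hΔ
  have hbalance : ∀ x y, x ≠ y → (outWeight w x y : ℤ) * Δ x = inWeight w x y * Δ y := by
    intro x y hxy
    have hxy' := congrArg (Nat.cast : ℕ → ℤ) (congrFun h (x, y))
    rw [PetriNet.tightMarking_cast (by omega), PetriNet.tightMarking_cast hj.le,
      drift_pairNet hxy, drift_pairNet hxy] at hxy'
    simp only [hΔ]
    linarith
  have hprop : ∀ x y, (w.count y : ℤ) * Δ x = w.count x * Δ y := by
    intro x y
    by_cases hxy : x = y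
    · rw [hxy]
    · have hy : ((Nat.gcd (w.count x) (w.count y) * outWeight w x y : ℕ) : ℤ) = w.count y := by
        rw [gcd_mul_outWeight]
      have hx : ((Nat.gcd (w.count x) (w.count y) * inWeight w x y : ℕ) : ℤ) = w.count x := by
        rw [gcd_mul_inWeight]
      push_cast at hx hy
      linear_combination (-Δ x) * hy + Δ y * hx +
        (Nat.gcd (w.count x) (w.count y) : ℤ) * hbalance x y hxy
  have hsum : ∑ x, Δ x = (j - i : ℤ) := by
    simp only [hΔ, Finset.sum_sub_distrib]
    rw [← Nat.cast_sum, ← Nat.cast_sum, sum_count_eq_length, sum_count_eq_length,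
      List.length_take, List.length_take, min_eq_left (by omega), min_eq_left (by omega)]
  have hdvd := sum_dvd_sum_of_proportional hprime hprop
  rw [sum_count_eq_length, hsum] at hdvd
  have := Int.le_of_dvd (by omega) hdvd
  omega

/-- sufficient condition for cyclic WMG-solvability. -/
theorem stmt7 {L : Type} [Fintype L] [DecidableEq L] (w : List L) (hw : 0 < w.length)
    (hprime : primeVec (fun t => parikh w t))
    (hcond : ∀ (q : Fin w.length) (a b : L), a ≠ b →
      w.get q = a → w.get ⟨(q.val + 1) % w.length, Nat.mod_lt _ hw⟩ = b →
      ∀ j : Fin w.length, segParikh w hw j q a ≠ 0 →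
        (parikh w b / Nat.gcd (parikh w a) (parikh w b)) * segParikh w hw j q a <
          (parikh w a / Nat.gcd (parikh w a) (parikh w b)) * (segParikh w hw j q b + 1)) :
    cyclicWMGSolvable w :=
  PetriNet.cyclicWMGSolvable_of_tightMarking hw pairNet_wmg pairNet_isPure drift_pairNet_length
    (fun _ hi => eq_of_pairNet_enabled_tightMarking (hw := hw) hcond hi)
    (fun _ _ hij hj => pairNet_tightMarking_ne hprime hij hj)
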